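/- arXiv:1606.08581 — 3 statements merged into one kernel-verified Lean document; each statement's English description precedes it below -/
import Mathlib

section
/- Let q > 1 be a prime power, n > t ≥ s ≥ 2 integers, and let P be a non-trivial vector space partition of F_q^n all of whose members have dimension in {1} ∪ {s, s+1, ..., t}, with m_1 holes (1-dimensional members) and with the total number of members of dimension at least s equal to l·q^s + x for nonnegative integers l, x. Then for every hyperplane H of F_q^n, the number m̂_1 of holes of P contained in H satisfies q·m̂_1 ≡ m_1 + x − 1 (mod q^s). -/
/-!
Counting the nonzero vectors of a subspace `W` member by member gives
`q ^ dim W - 1 = ∑ U ∈ P, (q ^ dim (U ⊓ W) - 1)`. Read this in a ring where `q ^ s = 0`, with `b`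
the number of non-hole members. For `W = ⊤` it says `m₁ (q - 1) = b - 1`. For `W = H`, multiplied
by `q`, it says `q m̂₁ (q - 1) = q (b - 1)`: a hole lies in `H` or meets it trivially, and every
other member meets `H` in dimension at least `s - 1`. As `q` is nilpotent, `q - 1` is a unit, and
eliminating gives `q m̂₁ = m₁ + b - 1 = |P| - 1`; finally `b ≡ x` modulo `q ^ s`.
-/

open Module Finset

section

variable {K V : Type*} [Field K] [AddCommGroup V] [Module K V]

def IsVectorSpacePartition (P : Finset (Submodule K V)) : Prop :=
  ∀ v : V, v ≠ 0 → ∃! U, U ∈ P ∧ v ∈ U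

noncomputable def holes (P : Finset (Submodule K V)) : Finset (Submodule K V) :=
  {U ∈ P | finrank K U = 1}

theorem holes_subset {P : Finset (Submodule K V)} : holes P ⊆ P :=
  filter_subset _ P

theorem le_finrank_of_mem_sdiff_holes {s : ℕ} {P : Finset (Submodule K V)}
    (hdim : ∀ U ∈ P, finrank K U = 1 ∨ s ≤ finrank K U)
    {U : Submodule K V} [DecidableEq (Submodule K V)] (hU : U ∈ P \ holes P) :
    s ≤ finrank K U := by
  rw [mem_sdiff, holes, mem_filter, not_and] at hU
  exact (hdim U hU.1).resolve_left (hU.2 hU.1)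

theorem Submodule.finrank_le_finrank_inf_add_one [FiniteDimensional K V] {H : Submodule K V}
    (hH : finrank K V ≤ finrank K H + 1) (U : Submodule K V) :
    finrank K U ≤ finrank K ↥(U ⊓ H) + 1 := by
  have := Submodule.finrank_sup_add_finrank_inf_eq U H
  have := (U ⊔ H).finrank_le
  omega

variable [Fintype V]

open Classical in
noncomputable def nonzeroVecs (W : Submodule K V) : Finset V :=
  ({v | v ∈ W} : Finset V).erase 0

theorem mem_nonzeroVecs {W : Submodule K V} {v : V} : v ∈ nonzeroVecs W ↔ v ∈ W ∧ v ≠ 0 := by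
  simp [nonzeroVecs, and_comm]

variable [Fintype K]

theorem card_nonzeroVecs_add_one (W : Submodule K V) :
    #(nonzeroVecs W) + 1 = Fintype.card K ^ finrank K W := by
  classical
  rw [nonzeroVecs, card_erase_add_one (by simp), ← card_eq_pow_finrank,
    Fintype.card_subtype]

theorem IsVectorSpacePartition.pow_finrank_sub_one_eq_sum {R : Type*} [CommRing R]
    {P : Finset (Submodule K V)} (hP : IsVectorSpacePartition P) (W : Submodule K V) :
    (Fintype.card K : R) ^ finrank K W - 1
      = ∑ U ∈ P, ((Fintype.card K : R) ^ finrank K ↥(U ⊓ W) - 1) := by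
  classical
  have hcast (W' : Submodule K V) :
      ((#(nonzeroVecs W') : ℕ) : R) = (Fintype.card K : R) ^ finrank K W' - 1 := by
    rw [← Nat.cast_pow, ← card_nonzeroVecs_add_one W']; push_cast; ring
  have hunion : nonzeroVecs W = P.biUnion fun U => nonzeroVecs (U ⊓ W) := by
    ext v
    simp only [mem_biUnion, mem_nonzeroVecs, Submodule.mem_inf]
    constructor
    · rintro ⟨hvW, hv⟩
      obtain ⟨U, ⟨hUP, hvU⟩, -⟩ := hP v hv
      exact ⟨U, hUP, ⟨hvU, hvW⟩, hv⟩
    · rintro ⟨U, -, ⟨-, hvW⟩, hv⟩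
      exact ⟨hvW, hv⟩
  have hdisj : (P : Set (Submodule K V)).PairwiseDisjoint fun U => nonzeroVecs (U ⊓ W) := by
    intro U₁ hU₁ U₂ hU₂ hne
    refine Finset.disjoint_left.2 fun v hv₁ hv₂ => hne ?_
    rw [mem_nonzeroVecs, Submodule.mem_inf] at hv₁ hv₂
    exact (hP v hv₁.2).unique ⟨hU₁, hv₁.1.1⟩ ⟨hU₂, hv₂.1.1⟩
  simp_rw [← hcast, hunion, card_biUnion hdisj, Nat.cast_sum]

variable {R : Type*} [CommRing R] {s : ℕ} {P : Finset (Submodule K V)}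

open Classical in
theorem IsVectorSpacePartition.card_holes_mul_sub_one (hP : IsVectorSpacePartition P)
    (hqs : (Fintype.card K : R) ^ s = 0) (hdim : ∀ U ∈ P, finrank K U = 1 ∨ s ≤ finrank K U)
    (hsV : s ≤ finrank K V) :
    (#(holes P) : R) * (Fintype.card K - 1) = #(P \ holes P) - 1 := by
  have hsum := hP.pow_finrank_sub_one_eq_sum (R := R) ⊤
  rw [finrank_top, pow_eq_zero_of_le hsV hqs, ← sum_sdiff holes_subset,
    sum_eq_card_nsmul (b := -1) fun U hU => by
      rw [inf_top_eq, pow_eq_zero_of_le (le_finrank_of_mem_sdiff_holes hdim hU) hqs, zero_sub],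
    sum_eq_card_nsmul (b := (Fintype.card K : R) - 1) fun U hU => by
      rw [inf_top_eq, (mem_filter.1 hU).2, pow_one],
    nsmul_eq_mul, nsmul_eq_mul] at hsum
  linear_combination -hsum

open Classical in
theorem IsVectorSpacePartition.card_mul_card_holes_le_mul_sub_one (hP : IsVectorSpacePartition P)
    (hqs : (Fintype.card K : R) ^ s = 0) (hdim : ∀ U ∈ P, finrank K U = 1 ∨ s ≤ finrank K U)
    (hsV : s ≤ finrank K V) {H : Submodule K V} (hH : finrank K V ≤ finrank K H + 1) :
    (Fintype.card K : R) * (#{U ∈ holes P | U ≤ H} * (Fintype.card K - 1))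
      = Fintype.card K * (#(P \ holes P) - 1) := by
  have hholes : ∑ U ∈ holes P, ((Fintype.card K : R) ^ finrank K ↥(U ⊓ H) - 1)
      = #{U ∈ holes P | U ≤ H} * (Fintype.card K - 1) := by
    rw [← nsmul_eq_mul, ← sum_const, sum_filter]
    refine sum_congr rfl fun U hU => ?_
    have hU1 : finrank K U = 1 := (mem_filter.1 hU).2
    split_ifs with hUH
    · rw [inf_eq_left.2 hUH, hU1, pow_one]
    · rw [((Submodule.isAtom_iff_finrank_eq_one.2 hU1).not_le_iff_disjoint.1 hUH).eq_bot,
        finrank_bot, pow_zero, sub_self]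
  have hbig : (Fintype.card K : R) * ∑ U ∈ P \ holes P,
      ((Fintype.card K : R) ^ finrank K ↥(U ⊓ H) - 1) = -(Fintype.card K * #(P \ holes P)) := by
    rw [mul_sum, sum_eq_card_nsmul (b := -(Fintype.card K : R)) fun U hU => ?_, nsmul_eq_mul]
    · ring
    have hsU := le_finrank_of_mem_sdiff_holes hdim hU
    have := Submodule.finrank_le_finrank_inf_add_one hH U
    rw [mul_sub, ← pow_succ', pow_eq_zero_of_le (by omega) hqs, mul_one, zero_sub]
  have hH0 : (Fintype.card K : R) * Fintype.card K ^ finrank K H = 0 := by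
    rw [← pow_succ', pow_eq_zero_of_le (by omega) hqs]
  have hsum := hP.pow_finrank_sub_one_eq_sum (R := R) H
  rw [← sum_sdiff holes_subset, hholes] at hsum
  linear_combination -(Fintype.card K : R) * hsum + hH0 - hbig

open Classical in
theorem IsVectorSpacePartition.card_mul_card_holes_le (hP : IsVectorSpacePartition P)
    (hqs : (Fintype.card K : R) ^ s = 0) (hdim : ∀ U ∈ P, finrank K U = 1 ∨ s ≤ finrank K U)
    (hsV : s ≤ finrank K V) {H : Submodule K V} (hH : finrank K V ≤ finrank K H + 1) :
    (Fintype.card K : R) * #{U ∈ holes P | U ≤ H} = #P - 1 := by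
  have hunit : IsUnit ((Fintype.card K : R) - 1) := IsNilpotent.isUnit_sub_one ⟨s, hqs⟩
  have hcard : (#(P \ holes P) : R) + #(holes P) = #P := by
    rw [← Nat.cast_add, card_sdiff_add_card_eq_card holes_subset]
  have hV := hP.card_holes_mul_sub_one hqs hdim hsV
  have hH := hP.card_mul_card_holes_le_mul_sub_one hqs hdim hsV hH
  refine hunit.mul_left_cancel ?_
  linear_combination hH - hV + (Fintype.card K - 1 : R) * hcard

end

theorem stmt_4_general (q n t s l x : ℕ) (F : Type*) [Field F] [Fintype F]
    (hF : Fintype.card F = q) (hnt : t < n) (hts : s ≤ t) (hs : 2 ≤ s)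
    (P : Set (Submodule F (Fin n → F)))
    (hP : ∀ v : Fin n → F, v ≠ 0 → ∃! U, U ∈ P ∧ v ∈ U)
    (hdim : ∀ U ∈ P, finrank F U = 1 ∨ (s ≤ finrank F U ∧ finrank F U ≤ t))
    (hcount : {U ∈ P | s ≤ finrank F U}.ncard = l * q ^ s + x)
    (m1 : ℕ) (hm1 : m1 = {U ∈ P | finrank F U = 1}.ncard)
    (H : Submodule F (Fin n → F)) (hH : finrank F H = n - 1) :
    (q : ℤ) * ({U ∈ P | finrank F U = 1 ∧ U ≤ H}.ncard : ℤ)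
      ≡ (m1 : ℤ) + (x : ℤ) - 1 [ZMOD ((q : ℤ) ^ s)] := by
  classical
  subst hF hm1
  obtain ⟨P, rfl⟩ := (Set.toFinite P).exists_finset_coe
  simp only [Finset.mem_coe] at hP hdim
  have hncard (p : Submodule F (Fin n → F) → Prop) [DecidablePred p] :
      {U ∈ (P : Set _) | p U}.ncard = #(P.filter p) := by
    rw [← Set.ncard_coe_finset, Finset.coe_filter]
    rfl
  have hbig : P.filter (fun U : Submodule F (Fin n → F) => s ≤ finrank F U) = P \ holes P := by
    rw [holes, ← filter_not]
    exact filter_congr fun U hU => by rcases hdim U hU with h | h <;> omega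
  have hcard : #P = (l * Fintype.card F ^ s + x) + #(holes P) := by
    rw [← hcount, hncard, hbig, card_sdiff_add_card_eq_card holes_subset]
  have hqs : (Fintype.card F : ZMod (Fintype.card F ^ s)) ^ s = 0 := by
    exact_mod_cast ZMod.natCast_self (Fintype.card F ^ s)
  have hrank : finrank F (Fin n → F) = n := Module.finrank_fin_fun F
  have key := IsVectorSpacePartition.card_mul_card_holes_le hP hqs
    (fun U hU => (hdim U hU).imp_right And.left) (by omega) (H := H) (by omega)
  rw [hcard, holes, filter_filter] at key
  rw [hncard, hncard, ← Nat.cast_pow, ← ZMod.intCast_eq_intCast_iff]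
  push_cast [hqs] at key ⊢
  linear_combination key

/-- For a non-trivial vector space partition of `F_q^n` of hole-type `(t,s,m₁)` with
`l·q^s + x` members of dimension at least `s`, the number `m̂₁` of holes in any
hyperplane satisfies `q·m̂₁ ≡ m₁ + x − 1 (mod q^s)`. -/
theorem stmt_4 (q n t s l x : ℕ) (hq : 1 < q) (F : Type*) [Field F] [Fintype F]
    (hF : Fintype.card F = q) (hnt : t < n) (hts : s ≤ t) (hs : 2 ≤ s)
    (P : Set (Submodule F (Fin n → F)))
    (hP : ∀ v : Fin n → F, v ≠ 0 → ∃! U, U ∈ P ∧ v ∈ U)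
    (hP0 : ∀ U ∈ P, U ≠ ⊥)
    (hPnontriv : ∃ U ∈ P, 1 < finrank F U)
    (hdim : ∀ U ∈ P, finrank F U = 1 ∨ (s ≤ finrank F U ∧ finrank F U ≤ t))
    (hcount : {U ∈ P | s ≤ finrank F U}.ncard = l * q ^ s + x)
    (m1 : ℕ) (hm1 : m1 = {U ∈ P | finrank F U = 1}.ncard)
    (H : Submodule F (Fin n → F)) (hH : finrank F H = n - 1) :
    (q : ℤ) * ({U ∈ P | finrank F U = 1 ∧ U ≤ H}.ncard : ℤ)
      ≡ (m1 : ℤ) + (x : ℤ) - 1 [ZMOD ((q : ℤ) ^ s)] :=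
  stmt_4_general q n t s l x F hF hnt hts hs P hP hdim hcount m1 hm1 H hH
end

section
/- Let q > 1 be a prime power and s ≥ 2, i an integer with 1 ≤ i ≤ s−1. Set c = i·q^s − [s]_q + s − 1, Δ = q^{s−1}, m = i(q−1), where [s]_q = (q^s−1)/(q−1). Then τ_q(c, Δ, m) = m(m−1)Δ²q² − c(2m−1)(q−1)Δq + c(q−1)(c(q−1)+1) < 0. -/
private lemma bern (q : ℤ) (hq : 2 ≤ q) (n : ℕ) : 1 + n * (q - 1) ≤ q ^ n := by
  have h := one_add_mul_le_pow (a := q - 1) (by linarith) n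
  have : (1 : ℤ) + (q - 1) = q := by ring
  rwa [this] at h

private lemma keyineq (q : ℤ) (hq : 2 ≤ q) (t : ℕ) :
    ((t + 1) * (q - 1) + 1) * ((t + 1) * (q - 1) + 2) < 2 * q ^ (t + 2) := by
  induction t with
  | zero =>
    simp only [Nat.cast_zero]
    have h2 : q ^ (0 + 2) = q * q := by ring
    nlinarith
  | succ t ih =>
    have hb := bern q hq (t + 2)
    have hpow : q ^ (t + 3) = q * q ^ (t + 2) := by ring
    have hk : (0 : ℤ) ≤ (t + 1 : ℤ) * (q - 1) := mul_nonneg (by positivity) (by linarith)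
    push_cast at ih hb ⊢
    nlinarith [mul_le_mul_of_nonneg_left hb (by linarith : (0:ℤ) ≤ q - 1),
      mul_le_mul_of_nonneg_left hb (by norm_num : (0:ℤ) ≤ 2)]

/-- For a prime power `q > 1`, `s ≥ 2`, `1 ≤ i ≤ s−1`, and
`c = i·q^s − [s]_q + s − 1`, `Δ = q^{s−1}`, `m = i(q−1)`, one has `τ_q(c,Δ,m) < 0`. -/
theorem stmt_7 (q s i : ℕ) (hq : 1 < q) (hpp : IsPrimePow q)
    (hs : 2 ≤ s) (hi1 : 1 ≤ i) (hi2 : i ≤ s - 1) :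
    let c : ℤ := (i : ℤ) * (q : ℤ) ^ s - ((q : ℤ) ^ s - 1) / ((q : ℤ) - 1) + (s : ℤ) - 1
    let Δ : ℤ := (q : ℤ) ^ (s - 1)
    let m : ℤ := (i : ℤ) * ((q : ℤ) - 1)
    m * (m - 1) * Δ ^ 2 * (q : ℤ) ^ 2
      - c * (2 * m - 1) * ((q : ℤ) - 1) * Δ * (q : ℤ)
      + c * ((q : ℤ) - 1) * (c * ((q : ℤ) - 1) + 1) < 0 := by
  intro c Δ m
  have hq2 : (2 : ℤ) ≤ (q : ℤ) := by exact_mod_cast hq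
  -- q * Δ = q ^ s
  have hΔ : (q : ℤ) * Δ = (q : ℤ) ^ s := by
    show (q : ℤ) * (q : ℤ) ^ (s - 1) = (q : ℤ) ^ s
    rw [← pow_succ']
    congr 1
    omega
  set P : ℤ := (q : ℤ) ^ s with hP
  -- divisibility and the value of c * (q - 1)
  have hdvd : ((q : ℤ) - 1) ∣ P - 1 := by
    simpa using sub_dvd_pow_sub_pow (q : ℤ) 1 s
  have hdivmul : (P - 1) / ((q : ℤ) - 1) * ((q : ℤ) - 1) = P - 1 :=
    Int.ediv_mul_cancel hdvd
  have hA : c * ((q : ℤ) - 1) =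
      (i : ℤ) * P * ((q : ℤ) - 1) - (P - 1) + ((s : ℤ) - 1) * ((q : ℤ) - 1) := by
    show ((i : ℤ) * P - (P - 1) / ((q : ℤ) - 1) + (s : ℤ) - 1) * ((q : ℤ) - 1) = _
    have : ((i : ℤ) * P - (P - 1) / ((q : ℤ) - 1) + (s : ℤ) - 1) * ((q : ℤ) - 1)
        = (i : ℤ) * P * ((q : ℤ) - 1) - (P - 1) / ((q : ℤ) - 1) * ((q : ℤ) - 1)
          + ((s : ℤ) - 1) * ((q : ℤ) - 1) := by ring
    rw [this, hdivmul]
  -- rewrite the target in terms of A := c * (q-1)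
  set A : ℤ := c * ((q : ℤ) - 1) with hAdef
  have hgoal : m * (m - 1) * Δ ^ 2 * (q : ℤ) ^ 2
      - c * (2 * m - 1) * ((q : ℤ) - 1) * Δ * (q : ℤ)
      + c * ((q : ℤ) - 1) * (c * ((q : ℤ) - 1) + 1)
      = m * (m - 1) * P ^ 2 - A * (2 * m - 1) * P + A * (A + 1) := by
    rw [← hΔ]; ring
  rw [hgoal]
  -- key algebraic identity
  have hm : m = (i : ℤ) * ((q : ℤ) - 1) := rfl
  have hid : m * (m - 1) * P ^ 2 - A * (2 * m - 1) * P + A * (A + 1)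
      = (i : ℤ) * ((q : ℤ) - 1) * P
        - (P - 1 - ((s : ℤ) - 1) * ((q : ℤ) - 1)) * (2 + ((s : ℤ) - 1) * ((q : ℤ) - 1)) := by
    rw [hm, hA]; ring
  rw [hid]
  -- bounds
  have his : (i : ℤ) ≤ (s : ℤ) - 1 := by
    have : i + 1 ≤ s := by omega
    have := (Nat.cast_le (α := ℤ)).2 this
    push_cast at this; linarith
  have hb : 1 + (s - 1 : ℕ) * ((q : ℤ) - 1) ≤ (q : ℤ) ^ (s - 1) := bern (q : ℤ) hq2 (s - 1)
  have hcast : ((s - 1 : ℕ) : ℤ) = (s : ℤ) - 1 := by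
    have : (1 : ℕ) ≤ s := by omega
    push_cast [Nat.cast_sub this]; ring
  rw [hcast] at hb
  have hΔpos : (0 : ℤ) < Δ := by positivity
  have hBpos : 1 + ((s : ℤ) - 1) * ((q : ℤ) - 1) ≤ P := by
    calc 1 + ((s : ℤ) - 1) * ((q : ℤ) - 1) ≤ Δ := hb
    _ ≤ (q : ℤ) * Δ := by nlinarith
    _ = P := hΔ
  -- key inequality: (k+1)(k+2) < 2P with k = (s-1)(q-1)
  have hkey : (((s : ℤ) - 1) * ((q : ℤ) - 1) + 1) * (((s : ℤ) - 1) * ((q : ℤ) - 1) + 2)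
      < 2 * P := by
    obtain ⟨t, ht⟩ : ∃ t, s = t + 2 := ⟨s - 2, by omega⟩
    subst ht
    have := keyineq (q : ℤ) hq2 t
    push_cast at this ⊢
    convert this using 2 <;> ring
  have hPpos : (0 : ℤ) < P := by positivity
  nlinarith [mul_nonneg (mul_nonneg (by linarith : (0:ℤ) ≤ (s : ℤ) - 1 - i)
      (by linarith : (0:ℤ) ≤ (q : ℤ) - 1)) hPpos.le]
end

section
/- Let q > 1 be a prime power and let λ = q^y for an integer y ≥ 2. Suppose w is an integer with (2w−1)² = 1 + 4λ(λ − a − 1) for an integer a ≥ 1. Then w ∈ {0, 1} and λ = a + 1. -/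
/-- If `λ = q^y` with `q > 1` a prime power and `y ≥ 2`, and `w` is an integer with
`(2w−1)² = 1 + 4λ(λ − a − 1)` for an integer `a ≥ 1`, then `w ∈ {0,1}` and `λ = a + 1`. -/
theorem stmt_11 (q y : ℕ) (hq : 1 < q) (hpp : IsPrimePow q) (hy : 2 ≤ y)
    (w a : ℤ) (ha : 1 ≤ a)
    (h : (2 * w - 1) ^ 2 = 1 + 4 * (q : ℤ) ^ y * ((q : ℤ) ^ y - a - 1)) :
    (w = 0 ∨ w = 1) ∧ (q : ℤ) ^ y = a + 1 := by
  obtain ⟨p, k, hp, hk, rfl⟩ := hpp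
  have hpN : Nat.Prime p := Nat.prime_iff.mpr hp
  have hp' : Prime (p : ℤ) := Nat.prime_iff_prime_int.mp hpN
  have hL : ((p ^ k : ℕ) : ℤ) ^ y = (p : ℤ) ^ (k * y) := by push_cast; ring
  set L : ℤ := (p : ℤ) ^ (k * y) with hLdef
  rw [hL] at h ⊢
  have hn2 : 2 ≤ k * y := le_trans hy (Nat.le_mul_of_pos_left y hk)
  have hp2 : (2 : ℤ) ≤ (p : ℤ) := by exact_mod_cast hpN.two_le
  have hL4 : (4 : ℤ) ≤ L := by
    calc (4 : ℤ) = 2 ^ 2 := by norm_num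
    _ ≤ (p : ℤ) ^ 2 := pow_le_pow_left₀ (by norm_num) hp2 2
    _ ≤ (p : ℤ) ^ (k * y) := pow_le_pow_right₀ (by linarith) hn2
  have key : w * (w - 1) = L * (L - a - 1) := by nlinarith [h]
  have hmain : w = 0 ∨ w = 1 := by
    by_contra hw
    push_neg at hw
    obtain ⟨hw0, hw1⟩ := hw
    have hw1' : w - 1 ≠ 0 := sub_ne_zero.mpr hw1
    have hdvd : L ∣ w * (w - 1) := Dvd.intro _ key.symm
    have habs : L ≤ |w| ∨ L ≤ |w - 1| := by
      by_cases hpw : (p : ℤ) ∣ w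
      · have hpw1 : ¬ (p : ℤ) ∣ (w - 1) := fun hc =>
          hp'.not_dvd_one (by simpa using dvd_sub hpw hc)
        have : L ∣ w := hp'.pow_dvd_of_dvd_mul_right _ hpw1 hdvd
        exact Or.inl (Int.le_of_dvd (abs_pos.mpr hw0) ((dvd_abs _ _).mpr this))
      · have : L ∣ (w - 1) := hp'.pow_dvd_of_dvd_mul_left _ hpw hdvd
        exact Or.inr (Int.le_of_dvd (abs_pos.mpr hw1') ((dvd_abs _ _).mpr this))
    have hnn : 0 ≤ w * (w - 1) := by
      rcases le_or_gt 1 w with hc | hc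
      · exact mul_nonneg (by linarith) (by linarith)
      · nlinarith [mul_nonneg (show (0:ℤ) ≤ -w by omega) (show (0:ℤ) ≤ -(w-1) by omega)]
    have heq : |w| * |w - 1| = w * (w - 1) := by
      rw [← abs_mul]; exact abs_of_nonneg hnn
    have hprod : L * (L - 1) ≤ w * (w - 1) := by
      rcases habs with hA | hA
      · have hb : L - 1 ≤ |w - 1| := by
          have := abs_sub_abs_le_abs_sub w 1
          simp only [abs_one] at this
          linarith
        have := mul_le_mul hA hb (by linarith) (abs_nonneg w)
        linarith [heq]
      · have hb : L - 1 ≤ |w| := by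
          have := abs_sub_abs_le_abs_sub (w - 1) w
          simp only [sub_sub_cancel_left, abs_neg, abs_one] at this
          linarith
        have := mul_le_mul hA hb (by linarith) (abs_nonneg (w - 1))
        linarith [heq, mul_comm (|w|) (|w - 1|)]
    have hub : L * (L - a - 1) ≤ L * (L - 2) :=
      mul_le_mul_of_nonneg_left (by linarith) (by linarith)
    linarith [key]
  refine ⟨hmain, ?_⟩
  have h0 : w * (w - 1) = 0 := by rcases hmain with rfl | rfl <;> ring
  have : L * (L - a - 1) = 0 := by linarith [key]
  rcases mul_eq_zero.mp this with hL0 | hL0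
  · linarith
  · linarith
end
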